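/- arXiv:1001.4126 — 2 statements merged into one kernel-verified Lean document; each statement's English description precedes it below -/
import Mathlib

section
/- Let 𝒜 = Π_{i≥0} 𝒜_i be a complete graded commutative ring with 𝒜_i·𝒜_j ⊆ 𝒜_{i+j}, equipped with a derivation D with D(𝒜_i) ⊆ 𝒜_{i+1}. For k ∈ ℤ let 𝒟_k = { Σ_{i≤k} f_i D^i : f_i ∈ 𝒜_{k−i} } be the homogeneous operators of degree k, and let 𝒟⁺ = ∪_{d∈ℤ} Π_{k≥d} 𝒟_k be the space of pseudo-differential operators of the second type. Then the multiplication determined by (f D^i)·(g D^j) = Σ_{r≥0} binom(i,r) f D^r(g) D^{i+j−r} is well defined on 𝒟⁺ (for each power of D and each graded component of 𝒜 only finitely many terms contribute), satisfies 𝒟_k·𝒟_l ⊆ Π_{m ≥ k+l} 𝒟_m, and makes 𝒟⁺ an associative unital ring. -/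
/-!
STATEMENT 17.  Let `𝒜 = Π_{i≥0} 𝒜_i` be a complete graded commutative ring
with `𝒜_i·𝒜_j ⊆ 𝒜_{i+j}`, equipped with a derivation `D` with
`D(𝒜_i) ⊆ 𝒜_{i+1}`.  Then on the space `𝒟⁺ = ∪_d Π_{k≥d} 𝒟_k` of
pseudo-differential operators of the second type, the multiplication
determined by `(f D^i)·(g D^j) = Σ_{r≥0} binom(i,r) f D^r(g) D^{i+j−r}` is
well defined (for each power of `D` and each graded component only finitely
many terms contribute), satisfies `𝒟_k·𝒟_l ⊆ Π_{m≥k+l} 𝒟_m`, and makes `𝒟⁺`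
an associative unital ring.

We encode the complete graded ring by a commutative ring `R` together with the
family `gr m : R →+ R` of projections onto the graded components, subject to
the axioms of a (topologically) complete grading: the projections are
orthogonal idempotents, they jointly separate points, every family of
homogeneous components is assembled by some element of `R` (completeness),
`1` is homogeneous of degree `0`, the product is graded, and the derivation
raises degrees by one.  An element of `𝒟⁺` is encoded by its coefficient
function `f : ℤ → R`, the coefficient `f i` of `D^i` being an element of the
complete graded ring `R = Π_j 𝒜_j`.
-/

namespace TwoBKPPlus

/-- The generalized binomial coefficient `binom(i,r) = i(i−1)⋯(i−r+1)/r! ∈ ℤ`. -/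
noncomputable def zchoose (i : ℤ) (r : ℕ) : ℤ := Ring.choose i r

variable {R : Type*} [CommRing R]

/-- `f : ℤ → R` lies in `Π_{k ≥ d} 𝒟_k`: the `𝒜_j`-component of the
coefficient of `D^i` vanishes whenever `j < d − i`. -/
def HomBound (gr : ℕ → R →+ R) (f : ℤ → R) (d : ℤ) : Prop :=
  ∀ (i : ℤ) (j : ℕ), (j : ℤ) < d - i → gr j (f i) = 0

/-- `f : ℤ → R` represents an element of `𝒟⁺ = ∪_d Π_{k≥d} 𝒟_k`. -/
def IsPDOPlus (gr : ℕ → R →+ R) (f : ℤ → R) : Prop := ∃ d : ℤ, HomBound gr f d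

/-- The contribution of the pair `p = (i,j)` to the `𝒜_m`-component of the
coefficient of `D^n` in the product, coming from the rule
`(f_i D^i)·(g_j D^j) = Σ_{r≥0} binom(i,r) f_i D^r(g_j) D^{i+j−r}` with
`r = i + j − n`. -/
noncomputable def prodTerm (gr : ℕ → R →+ R) (D : R → R) (f g : ℤ → R)
    (n : ℤ) (m : ℕ) (p : ℤ × ℤ) : R :=
  if 0 ≤ p.1 + p.2 - n then
    gr m (zchoose p.1 (p.1 + p.2 - n).toNat •
      (f p.1 * D^[(p.1 + p.2 - n).toNat] (g p.2)))
  else 0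

/-- The `𝒜_m`-component of the coefficient of `D^n` in the product. -/
noncomputable def prodCoeff (gr : ℕ → R →+ R) (D : R → R) (f g : ℤ → R)
    (n : ℤ) (m : ℕ) : R :=
  ∑ᶠ p : ℤ × ℤ, prodTerm gr D f g n m p

open Classical in
/-- The product on `𝒟⁺`: the coefficient of `D^n` is the element of
`R = Π_j 𝒜_j` assembling (via completeness) the graded components
`prodCoeff gr D f g n m`. -/
noncomputable def pmulP (gr : ℕ → R →+ R) (D : R → R) (f g : ℤ → R) : ℤ → R :=
  fun n =>
    if h : ∃ a : R, ∀ m : ℕ, gr m a = prodCoeff gr D f g n m then h.choose else 0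

/-- The unit `1 = 1·D⁰` of `𝒟⁺`. -/
def ponep : ℤ → R := fun n => if n = 0 then (1 : R) else 0

end TwoBKPPlus

/-!
A term `f_i D^r(g_j)` of a product can reach the graded component `𝒜_m` only if `(i, j)` lies in
a box determined by `m` and the lower bounds of `f` and `g`; this is tracked by `OrderGE`, which
records that an element lies in `Π_{j ≥ d} 𝒜_j`. Hence every graded component of every
coefficient is a finite sum, and these components are homogeneous, so completeness assembles them.
Associativity is checked one graded component at a time: in degree `m` both bracketings expand
into finite sums, over `(i, j, k)`, of the contributions of the monomials
`f_i D^i · g_j D^j · h_k D^k`. For a monomial the two bracketings agree by the Leibniz rule and the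
Chu–Vandermonde identity for generalized binomial coefficients.
-/

open Finset Function

theorem Finset.sum_antidiagonal_antidiagonal {M : Type*} [AddCommMonoid M] (T : ℕ)
    (F : ℕ → ℕ → ℕ → M) :
    ∑ x ∈ antidiagonal T, ∑ y ∈ antidiagonal x.1, F y.1 y.2 x.2 =
      ∑ x ∈ antidiagonal T, ∑ y ∈ antidiagonal x.2, F x.1 y.1 y.2 := by
  rw [sum_sigma', sum_sigma']
  refine sum_nbij' (fun a => ⟨(a.2.1, a.2.2 + a.1.2), (a.2.2, a.1.2)⟩)
    (fun b => ⟨(b.1.1 + b.2.1, b.2.2), (b.1.1, b.2.1)⟩) ?_ ?_ ?_ ?_ ?_ <;>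
    simp +contextual only [mem_sigma, HasAntidiagonal.mem_antidiagonal, and_true, and_imp,
      Prod.mk.eta, Sigma.eta, implies_true] <;> omega

theorem finsum_finsum_eq_of_equiv {α β γ δ M : Type*} [AddCommMonoid M] (e : γ × δ ≃ α × β)
    {Φ : α × β → M} (hΦ : (support Φ).Finite) :
    ∑ᶠ (a) (b), Φ (a, b) = ∑ᶠ (c) (d), Φ (e (c, d)) := by
  rw [← finsum_curry Φ hΦ, ← finsum_comp_equiv e]
  exact finsum_curry (Φ ∘ e) (hΦ.preimage e.injective.injOn)

theorem Ring.sum_antidiagonal_choose_mul_choose {A : Type*} [CommRing A] [BinomialRing A]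
    (r s : A) (c y : ℕ) :
    ∑ x ∈ antidiagonal y, (c + x.1).choose c • (Ring.choose r (c + x.1) * Ring.choose s x.2) =
      Ring.choose r c * Ring.choose (r - c + s) y := by
  rw [Ring.add_choose_eq y (Commute.all _ _), mul_sum]
  refine sum_congr rfl fun x _ => ?_
  rw [← smul_mul_assoc, Ring.choose_smul_choose r (Nat.le_add_right c x.1),
    Nat.add_sub_cancel_left, mul_assoc]

namespace Derivation

section CommSemiring

variable {S A : Type*} [CommSemiring S] [CommSemiring A] [Algebra S A] (D : Derivation S A A)

theorem iterate_map_mul (n : ℕ) (a b : A) :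
    D^[n] (a * b) = ∑ ij ∈ antidiagonal n, n.choose ij.1 • (D^[ij.1] a * D^[ij.2] b) := by
  induction n generalizing a b with
  | zero => simp
  | succ n ih =>
    rw [sum_antidiagonal_choose_succ_nsmul (M := A) (fun i j => D^[i] a * D^[j] b) n]
    simp only [Function.iterate_succ_apply', ih, map_sum, map_nsmul, leibniz, smul_eq_mul,
      smul_add, sum_add_distrib]
    congr 1
    refine sum_congr rfl fun ij hij => ?_
    rw [n.choose_symm_of_eq_add (HasAntidiagonal.mem_antidiagonal.1 hij).symm, mul_comm]

theorem iterate_map_sum {ι : Type*} (s : Finset ι) (a : ι → A) (n : ℕ) :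
    D^[n] (∑ i ∈ s, a i) = ∑ i ∈ s, D^[n] (a i) := by
  induction n with
  | zero => rfl
  | succ n ih => simp only [Function.iterate_succ_apply', ih, map_sum]

theorem iterate_map_one {n : ℕ} (hn : n ≠ 0) : D^[n] (1 : A) = 0 := by
  obtain ⟨n, rfl⟩ := Nat.exists_eq_succ_of_ne_zero hn
  rw [Function.iterate_succ_apply, map_one_eq_zero, iterate_map_zero]

end CommSemiring

section CommRing

variable {S A : Type*} [CommSemiring S] [CommRing A] [Algebra S A] (D : Derivation S A A)

/-- The coefficient of `D^(i+j+k-T)` in `(a D^i)(b D^j)(c D^k)`, computed with the left and with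
the right bracketing. -/
theorem sum_antidiagonal_choose_smul_assoc (i j : ℤ) (T : ℕ) (a b c : A) :
    ∑ x ∈ antidiagonal T,
        (Ring.choose (i + j - x.1) x.2 * Ring.choose i x.1) • (a * D^[x.1] b * D^[x.2] c) =
      ∑ x ∈ antidiagonal T,
        (Ring.choose i x.1 * Ring.choose j x.2) • (a * D^[x.1] (b * D^[x.2] c)) := by
  set F : ℕ → ℕ → ℕ → A := fun u v s =>
    (Ring.choose i (u + v) * Ring.choose j s * ((u + v).choose u : ℤ)) •
      (a * D^[u] b * D^[v + s] c)
  have expand : ∀ x ∈ antidiagonal T,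
      (Ring.choose i x.1 * Ring.choose j x.2) • (a * D^[x.1] (b * D^[x.2] c)) =
        ∑ y ∈ antidiagonal x.1, F y.1 y.2 x.2 := by
    intro x _
    rw [iterate_map_mul, mul_sum, smul_sum]
    refine sum_congr rfl fun y hy => ?_
    rw [HasAntidiagonal.mem_antidiagonal] at hy
    simp only [F, hy, ← natCast_zsmul, mul_smul_comm, smul_smul, ← mul_assoc,
      Function.iterate_add_apply]
  rw [sum_congr rfl expand, sum_antidiagonal_antidiagonal]
  refine sum_congr rfl fun x _ => ?_
  have vandermonde := Ring.sum_antidiagonal_choose_mul_choose i j x.1 x.2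
  simp only [nsmul_eq_mul] at vandermonde
  calc (Ring.choose (i + j - x.1) x.2 * Ring.choose i x.1) • (a * D^[x.1] b * D^[x.2] c)
      = (∑ y ∈ antidiagonal x.2, Ring.choose i (x.1 + y.1) * Ring.choose j y.2 *
          ((x.1 + y.1).choose x.1 : ℤ)) • (a * D^[x.1] b * D^[x.2] c) := by
        rw [show i - x.1 + j = i + j - x.1 by ring] at vandermonde
        rw [mul_comm (Ring.choose (i + j - x.1) x.2), ← vandermonde]
        congr 1
        exact sum_congr rfl fun y _ => by ring
    _ = ∑ y ∈ antidiagonal x.2, F x.1 y.1 y.2 := by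
        rw [sum_smul]
        refine sum_congr rfl fun y hy => ?_
        simp only [F, HasAntidiagonal.mem_antidiagonal.1 hy]

end CommRing

end Derivation

namespace TwoBKPPlus

variable {R : Type*} [CommRing R]

structure IsCompleteGrading (gr : ℕ → R →+ R) : Prop where
  idem : ∀ (m : ℕ) (a : R), gr m (gr m a) = gr m a
  sep : ∀ a b : R, (∀ m : ℕ, gr m a = gr m b) → a = b
  complete : ∀ c : ℕ → R, (∀ m : ℕ, gr m (c m) = c m) → ∃ a : R, ∀ m, gr m a = c m

def IsGradedMul (gr : ℕ → R →+ R) : Prop :=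
  ∀ (m : ℕ) (a b : R), gr m (a * b) = ∑ i ∈ range (m + 1), gr i a * gr (m - i) b

structure RaisesDegree (gr : ℕ → R →+ R) (D : R → R) : Prop where
  succ : ∀ (m : ℕ) (a : R), gr (m + 1) (D a) = D (gr m a)
  zero : ∀ a : R, gr 0 (D a) = 0

def OrderGE (gr : ℕ → R →+ R) (d : ℤ) (x : R) : Prop :=
  ∀ j : ℕ, (j : ℤ) < d → gr j x = 0

variable {gr : ℕ → R →+ R} {D : Derivation ℤ R R}

theorem IsGradedMul.gr_mul_congr_left (hmul : IsGradedMul gr) {m : ℕ} {a a' : R}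
    (h : ∀ μ ≤ m, gr μ a = gr μ a') (b : R) : gr m (a * b) = gr m (a' * b) := by
  rw [hmul, hmul]
  exact sum_congr rfl fun μ hμ => by rw [h μ (Nat.lt_succ_iff.1 (mem_range.1 hμ))]

theorem IsGradedMul.gr_mul_congr_right (hmul : IsGradedMul gr) {m : ℕ} {b b' : R}
    (h : ∀ μ ≤ m, gr μ b = gr μ b') (a : R) : gr m (a * b) = gr m (a * b') := by
  rw [mul_comm a, mul_comm a, hmul.gr_mul_congr_left h]

theorem RaisesDegree.gr_iterate (hD : RaisesDegree gr D) (r t : ℕ) (a : R) :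
    gr t (D^[r] a) = if r ≤ t then D^[r] (gr (t - r) a) else 0 := by
  induction r generalizing t a with
  | zero => simp
  | succ r ih =>
    rw [Function.iterate_succ_apply, ih]
    by_cases hrt : r + 1 ≤ t
    · rw [if_pos (by omega), if_pos hrt, show t - r = t - (r + 1) + 1 by omega, hD.succ,
        ← Function.iterate_succ_apply]
    · rw [if_neg hrt]
      split_ifs
      · rw [show t - r = 0 by omega, hD.zero, iterate_map_zero]
      · rfl

theorem RaisesDegree.gr_iterate_congr (hD : RaisesDegree gr D) {m : ℕ} {a b : R}
    (h : ∀ μ ≤ m, gr μ a = gr μ b) (r : ℕ) : ∀ μ ≤ m, gr μ (D^[r] a) = gr μ (D^[r] b) := by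
  intro μ hμ
  rw [hD.gr_iterate, hD.gr_iterate, h (μ - r) (by omega)]

namespace OrderGE

variable {d e : ℤ} {x y : R}

theorem zero : OrderGE gr d 0 := fun _ _ => map_zero _

theorem of_nonpos (hd : d ≤ 0) : OrderGE gr d x :=
  fun j hj => absurd hj (by omega)

theorem mono (h : OrderGE gr d x) (hed : e ≤ d) : OrderGE gr e x :=
  fun j hj => h j (by omega)

theorem max_zero (h : OrderGE gr d x) : OrderGE gr (max d 0) x :=
  fun j hj => h j (by omega)

theorem le_of_gr_ne_zero (h : OrderGE gr d x) {m : ℕ} (hx : gr m x ≠ 0) : d ≤ m := by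
  by_contra hlt
  exact hx (h m (by omega))

theorem zsmul (h : OrderGE gr d x) (c : ℤ) : OrderGE gr d (c • x) :=
  fun j hj => by rw [map_zsmul, h j hj, smul_zero]

theorem mul (hmul : IsGradedMul gr) (hx : OrderGE gr d x) (hy : OrderGE gr e y) :
    OrderGE gr (d + e) (x * y) := by
  intro j hj
  rw [hmul]
  refine sum_eq_zero fun i hi => ?_
  have hij := Nat.lt_succ_iff.1 (mem_range.1 hi)
  by_cases hid : (i : ℤ) < d
  · rw [hx i hid, zero_mul]
  · rw [hy (j - i) (by omega), mul_zero]

theorem iterate (hD : RaisesDegree gr D) (hx : OrderGE gr d x) (r : ℕ) :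
    OrderGE gr (d + r) (D^[r] x) := by
  intro t ht
  rw [hD.gr_iterate]
  split_ifs
  · rw [hx (t - r) (by omega), iterate_map_zero]
  · rfl

end OrderGE

theorem HomBound.orderGE {f : ℤ → R} {d : ℤ} (hf : HomBound gr f d) (i : ℤ) :
    OrderGE gr (max (d - i) 0) (f i) :=
  OrderGE.max_zero (hf i)

noncomputable def mulTerm (D : R → R) (f g : ℤ → R) (n : ℤ) (p : ℤ × ℤ) : R :=
  if 0 ≤ p.1 + p.2 - n then
    zchoose p.1 (p.1 + p.2 - n).toNat • (f p.1 * D^[(p.1 + p.2 - n).toNat] (g p.2))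
  else 0

section Terms

variable {φ : R → R} {f g h F G : ℤ → R} {n : ℤ} {p : ℤ × ℤ}

theorem prodTerm_eq_gr_mulTerm (m : ℕ) :
    prodTerm gr φ f g n m p = gr m (mulTerm φ f g n p) := by
  unfold prodTerm mulTerm
  split_ifs <;> simp

theorem mulTerm_of_neg (hp : p.1 + p.2 - n < 0) : mulTerm φ f g n p = 0 :=
  if_neg (by omega)

theorem mulTerm_of_left_eq_zero (hf : f p.1 = 0) : mulTerm φ f g n p = 0 := by
  simp [mulTerm, hf]

theorem mulTerm_of_right_eq_zero (hg : g p.2 = 0) : mulTerm ⇑D f g n p = 0 := by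
  simp [mulTerm, hg]

theorem mulTerm_add_left : mulTerm φ (f + g) h n p = mulTerm φ f h n p + mulTerm φ g h n p := by
  unfold mulTerm
  split_ifs <;> simp [add_mul]

theorem mulTerm_add_right :
    mulTerm ⇑D f (g + h) n p = mulTerm ⇑D f g n p + mulTerm ⇑D f h n p := by
  unfold mulTerm
  split_ifs <;> simp [iterate_map_add, mul_add]

theorem mulTerm_sum_left {ι : Type*} (s : Finset ι) (F : ι → ℤ → R) :
    mulTerm φ (fun i => ∑ x ∈ s, F x i) g n p = ∑ x ∈ s, mulTerm φ (F x) g n p := by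
  unfold mulTerm
  split_ifs <;> simp [sum_mul, smul_sum]

theorem mulTerm_sum_right {ι : Type*} (s : Finset ι) (G : ι → ℤ → R) :
    mulTerm ⇑D f (fun i => ∑ x ∈ s, G x i) n p = ∑ x ∈ s, mulTerm ⇑D f (G x) n p := by
  unfold mulTerm
  split_ifs
  · simp [D.iterate_map_sum, mul_sum, smul_sum]
  · simp

theorem orderGE_mulTerm (hmul : IsGradedMul gr) (hD : RaisesDegree gr D) {a b : ℤ}
    (hF : OrderGE gr a (F p.1)) (hG : OrderGE gr b (G p.2)) :
    OrderGE gr (a + b + max (p.1 + p.2 - n) 0) (mulTerm ⇑D F G n p) := by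
  unfold mulTerm
  split_ifs with hp
  · refine ((hF.mul hmul (hG.iterate hD _)).zsmul _).mono ?_
    omega
  · exact OrderGE.zero

theorem gr_mulTerm_congr_left (hmul : IsGradedMul gr) {m : ℕ} {F' : ℤ → R}
    (hFF : ∀ μ ≤ m, gr μ (F p.1) = gr μ (F' p.1)) :
    gr m (mulTerm φ F h n p) = gr m (mulTerm φ F' h n p) := by
  unfold mulTerm
  split_ifs
  · rw [map_zsmul, map_zsmul, hmul.gr_mul_congr_left hFF]
  · rfl

theorem gr_mulTerm_congr_right (hmul : IsGradedMul gr) (hD : RaisesDegree gr D) {m : ℕ}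
    {G' : ℤ → R} (hGG : ∀ μ ≤ m, gr μ (G p.2) = gr μ (G' p.2)) :
    gr m (mulTerm ⇑D f G n p) = gr m (mulTerm ⇑D f G' n p) := by
  unfold mulTerm
  split_ifs
  · rw [map_zsmul, map_zsmul, hmul.gr_mul_congr_right (hD.gr_iterate_congr hGG _)]
  · rfl

end Terms

section Product

variable {f g h : ℤ → R} {df dg dh : ℤ}

theorem orderGE_mulTerm_of_homBound (hmul : IsGradedMul gr) (hD : RaisesDegree gr D)
    (hf : HomBound gr f df) (hg : HomBound gr g dg) (n : ℤ) (p : ℤ × ℤ) :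
    OrderGE gr (max (df - p.1) 0 + max (dg - p.2) 0 + max (p.1 + p.2 - n) 0)
      (mulTerm ⇑D f g n p) :=
  orderGE_mulTerm hmul hD (hf.orderGE p.1) (hg.orderGE p.2)

theorem support_prodTerm_subset (hmul : IsGradedMul gr) (hD : RaisesDegree gr D)
    (hf : HomBound gr f df) (hg : HomBound gr g dg) (n : ℤ) (m : ℕ) :
    support (prodTerm gr ⇑D f g n m) ⊆ Set.Icc (df - m, dg - m) (n + m - dg, n + m - df) := by
  intro p hp
  rw [mem_support, prodTerm_eq_gr_mulTerm] at hp
  have := (orderGE_mulTerm_of_homBound hmul hD hf hg n p).le_of_gr_ne_zero hp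
  simp only [Set.mem_Icc, Prod.le_def]
  omega

theorem support_prodTerm_finite (hmul : IsGradedMul gr) (hD : RaisesDegree gr D)
    (hf : HomBound gr f df) (hg : HomBound gr g dg) (n : ℤ) (m : ℕ) :
    (support (prodTerm gr ⇑D f g n m)).Finite :=
  (Set.finite_Icc _ _).subset (support_prodTerm_subset hmul hD hf hg n m)

theorem gr_prodCoeff (hgr : IsCompleteGrading gr) (hmul : IsGradedMul gr)
    (hD : RaisesDegree gr D) (hf : HomBound gr f df) (hg : HomBound gr g dg) (n : ℤ) (m : ℕ) :
    gr m (prodCoeff gr ⇑D f g n m) = prodCoeff gr ⇑D f g n m := by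
  rw [prodCoeff, map_finsum _ (support_prodTerm_finite hmul hD hf hg n m)]
  exact finsum_congr fun p => by rw [prodTerm_eq_gr_mulTerm, hgr.idem]

theorem exists_gr_eq_prodCoeff (hgr : IsCompleteGrading gr) (hmul : IsGradedMul gr)
    (hD : RaisesDegree gr D) (hf : HomBound gr f df) (hg : HomBound gr g dg) (n : ℤ) :
    ∃ a : R, ∀ m : ℕ, gr m a = prodCoeff gr ⇑D f g n m :=
  hgr.complete _ (gr_prodCoeff hgr hmul hD hf hg n)

theorem gr_pmulP (hgr : IsCompleteGrading gr) (hmul : IsGradedMul gr)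
    (hD : RaisesDegree gr D) (hf : HomBound gr f df) (hg : HomBound gr g dg) (n : ℤ) (m : ℕ) :
    gr m (pmulP gr ⇑D f g n) = prodCoeff gr ⇑D f g n m := by
  have ha := exists_gr_eq_prodCoeff hgr hmul hD hf hg n
  rw [pmulP, dif_pos ha]
  exact ha.choose_spec m

theorem homBound_pmulP (hgr : IsCompleteGrading gr) (hmul : IsGradedMul gr)
    (hD : RaisesDegree gr D) (hf : HomBound gr f df) (hg : HomBound gr g dg) :
    HomBound gr (pmulP gr ⇑D f g) (df + dg) := by
  intro n m hm
  rw [gr_pmulP hgr hmul hD hf hg]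
  refine finsum_eq_zero_of_forall_eq_zero fun p => ?_
  rw [prodTerm_eq_gr_mulTerm]
  exact (orderGE_mulTerm_of_homBound hmul hD hf hg n p).mono (by omega) m hm

end Product

section UnitAndDistrib

variable {f g h : ℤ → R} {df dg dh : ℤ} {n : ℤ}

theorem homBound_ponep : HomBound gr (ponep : ℤ → R) 0 := by
  intro i j hj
  rw [ponep, if_neg (by omega), map_zero]

theorem HomBound.add (hf : HomBound gr f df) (hg : HomBound gr g dg) :
    HomBound gr (f + g) (min df dg) := by
  intro i j hj
  rw [Pi.add_apply, map_add, hf i j (by omega), hg i j (by omega), add_zero]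

theorem mulTerm_ponep_left (p : ℤ × ℤ) :
    mulTerm ⇑D ponep f n p = if p = (0, n) then f n else 0 := by
  obtain ⟨i, q⟩ := p
  by_cases hi : i = 0
  · subst hi
    simp only [mulTerm, ponep, zchoose, Ring.choose_zero_ite, Prod.mk.injEq, true_and]
    split_ifs <;> first | omega | simp_all
  · rw [mulTerm_of_left_eq_zero (by simp [ponep, hi]), if_neg (by simp [hi])]

theorem mulTerm_ponep_right (p : ℤ × ℤ) :
    mulTerm ⇑D f ponep n p = if p = (n, 0) then f n else 0 := by
  obtain ⟨i, q⟩ := p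
  by_cases hq : q = 0
  · subst hq
    simp only [mulTerm, ponep, Prod.mk.injEq, and_true, add_zero]
    split_ifs with hn hin
    · simp [hin, zchoose]
    · rw [D.iterate_map_one (by omega), mul_zero, smul_zero]
    · omega
    · rfl
  · rw [mulTerm_of_right_eq_zero (by simp [ponep, hq]), if_neg (by simp [hq])]

theorem pmulP_ponep_left (hgr : IsCompleteGrading gr) (hmul : IsGradedMul gr)
    (hD : RaisesDegree gr D) (hf : HomBound gr f df) : pmulP gr ⇑D ponep f = f := by
  funext n
  refine hgr.sep _ _ fun m => ?_
  rw [gr_pmulP hgr hmul hD homBound_ponep hf, prodCoeff]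
  simp_rw [prodTerm_eq_gr_mulTerm, mulTerm_ponep_left, apply_ite (gr m), map_zero]
  rw [finsum_eq_single _ (0, n) fun p hp => if_neg hp, if_pos rfl]

theorem pmulP_ponep_right (hgr : IsCompleteGrading gr) (hmul : IsGradedMul gr)
    (hD : RaisesDegree gr D) (hf : HomBound gr f df) : pmulP gr ⇑D f ponep = f := by
  funext n
  refine hgr.sep _ _ fun m => ?_
  rw [gr_pmulP hgr hmul hD hf homBound_ponep, prodCoeff]
  simp_rw [prodTerm_eq_gr_mulTerm, mulTerm_ponep_right, apply_ite (gr m), map_zero]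
  rw [finsum_eq_single _ (n, 0) fun p hp => if_neg hp, if_pos rfl]

theorem pmulP_add_right (hgr : IsCompleteGrading gr) (hmul : IsGradedMul gr)
    (hD : RaisesDegree gr D) (hf : HomBound gr f df) (hg : HomBound gr g dg)
    (hh : HomBound gr h dh) :
    pmulP gr ⇑D f (g + h) = pmulP gr ⇑D f g + pmulP gr ⇑D f h := by
  funext n
  refine hgr.sep _ _ fun m => ?_
  rw [Pi.add_apply, map_add, gr_pmulP hgr hmul hD hf (hg.add hh), gr_pmulP hgr hmul hD hf hg,
    gr_pmulP hgr hmul hD hf hh, prodCoeff, prodCoeff, prodCoeff,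
    ← finsum_add_distrib (support_prodTerm_finite hmul hD hf hg n m)
      (support_prodTerm_finite hmul hD hf hh n m)]
  simp only [prodTerm_eq_gr_mulTerm, mulTerm_add_right, map_add]

theorem pmulP_add_left (hgr : IsCompleteGrading gr) (hmul : IsGradedMul gr)
    (hD : RaisesDegree gr D) (hf : HomBound gr f df) (hg : HomBound gr g dg)
    (hh : HomBound gr h dh) :
    pmulP gr ⇑D (f + g) h = pmulP gr ⇑D f h + pmulP gr ⇑D g h := by
  funext n
  refine hgr.sep _ _ fun m => ?_
  rw [Pi.add_apply, map_add, gr_pmulP hgr hmul hD (hf.add hg) hh, gr_pmulP hgr hmul hD hf hh,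
    gr_pmulP hgr hmul hD hg hh, prodCoeff, prodCoeff, prodCoeff,
    ← finsum_add_distrib (support_prodTerm_finite hmul hD hf hh n m)
      (support_prodTerm_finite hmul hD hg hh n m)]
  simp only [prodTerm_eq_gr_mulTerm, mulTerm_add_left, map_add]

end UnitAndDistrib

/-- With `y = (p, k)` and `x = (i, j)`: the contribution of `f_i D^i · g_j D^j · h_k D^k` to the
coefficient of `D^n` in `(f g) h`, through the term `D^p` of `f g`. -/
noncomputable def assocTermLeft (D : R → R) (f g h : ℤ → R) (n : ℤ) (y x : ℤ × ℤ) : R :=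
  mulTerm D (fun p => mulTerm D f g p x) h n y

/-- With `y = (i, q)` and `x = (j, k)`: the same contribution to `f (g h)`, through the term `D^q`
of `g h`. -/
noncomputable def assocTermRight (D : R → R) (f g h : ℤ → R) (n : ℤ) (y x : ℤ × ℤ) : R :=
  mulTerm D f (fun q => mulTerm D g h q x) n y

section Assoc

variable {f g h : ℤ → R} {df dg dh : ℤ} {n : ℤ}

theorem assocTermLeft_eq_zero {φ : R → R} {p k i j : ℤ}
    (hneg : p + k - n < 0 ∨ i + j - p < 0) :
    assocTermLeft φ f g h n (p, k) (i, j) = 0 := by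
  rcases hneg with hneg | hneg
  · exact mulTerm_of_neg hneg
  · exact mulTerm_of_left_eq_zero (mulTerm_of_neg hneg)

theorem assocTermRight_eq_zero {i q j k : ℤ} (hneg : i + q - n < 0 ∨ j + k - q < 0) :
    assocTermRight ⇑D f g h n (i, q) (j, k) = 0 := by
  rcases hneg with hneg | hneg
  · exact mulTerm_of_neg hneg
  · exact mulTerm_of_right_eq_zero (mulTerm_of_neg hneg)

theorem orderGE_assocTermLeft (hmul : IsGradedMul gr) (hD : RaisesDegree gr D)
    (hf : HomBound gr f df) (hg : HomBound gr g dg) (hh : HomBound gr h dh) (p k i j : ℤ) :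
    OrderGE gr (max (df - i) 0 + max (dg - j) 0 + max (i + j - p) 0 + max (dh - k) 0 +
      max (p + k - n) 0) (assocTermLeft ⇑D f g h n (p, k) (i, j)) :=
  orderGE_mulTerm (F := fun p' => mulTerm ⇑D f g p' (i, j)) (p := (p, k)) hmul hD
    (orderGE_mulTerm_of_homBound hmul hD hf hg p (i, j)) (hh.orderGE k)

theorem orderGE_assocTermRight (hmul : IsGradedMul gr) (hD : RaisesDegree gr D)
    (hf : HomBound gr f df) (hg : HomBound gr g dg) (hh : HomBound gr h dh) (i q j k : ℤ) :
    OrderGE gr (max (df - i) 0 + (max (dg - j) 0 + max (dh - k) 0 + max (j + k - q) 0) +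
      max (i + q - n) 0) (assocTermRight ⇑D f g h n (i, q) (j, k)) :=
  orderGE_mulTerm (G := fun q' => mulTerm ⇑D g h q' (j, k)) (p := (i, q)) hmul hD
    (hf.orderGE i) (orderGE_mulTerm_of_homBound hmul hD hg hh q (j, k))

theorem gr_pmulP_eq_gr_sum (hgr : IsCompleteGrading gr) (hmul : IsGradedMul gr)
    (hD : RaisesDegree gr D) (hf : HomBound gr f df) (hg : HomBound gr g dg) (p : ℤ)
    {m μ : ℕ} (hμ : μ ≤ m) :
    gr μ (pmulP gr ⇑D f g p) =
      gr μ (∑ x ∈ Finset.Icc (df - m, dg - m) (p + m - dg, p + m - df), mulTerm ⇑D f g p x) := by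
  have hS : support (prodTerm gr ⇑D f g p μ) ⊆
      Finset.Icc (df - m, dg - m) (p + m - dg, p + m - df) := by
    intro x hx
    have := support_prodTerm_subset hmul hD hf hg p μ hx
    simp only [coe_Icc, Set.mem_Icc, Prod.le_def] at this ⊢
    omega
  rw [gr_pmulP hgr hmul hD hf hg, prodCoeff, finsum_eq_sum_of_support_subset _ hS, map_sum]
  simp only [prodTerm_eq_gr_mulTerm]

theorem gr_mulTerm_pmulP_left (hgr : IsCompleteGrading gr) (hmul : IsGradedMul gr)
    (hD : RaisesDegree gr D) (hf : HomBound gr f df) (hg : HomBound gr g dg) (h : ℤ → R)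
    (m : ℕ) (y : ℤ × ℤ) :
    gr m (mulTerm ⇑D (pmulP gr ⇑D f g) h n y) =
      ∑ᶠ x, gr m (assocTermLeft ⇑D f g h n y x) := by
  rw [gr_mulTerm_congr_left (F' := fun p => ∑ x ∈ Finset.Icc (df - m, dg - m)
      (y.1 + m - dg, y.1 + m - df), mulTerm ⇑D f g p x) hmul
      fun μ hμ => gr_pmulP_eq_gr_sum hgr hmul hD hf hg y.1 hμ,
    mulTerm_sum_left, map_sum]
  refine (finsum_eq_sum_of_support_subset _ fun x hx => ?_).symm
  have := (orderGE_mulTerm (F := fun p => mulTerm ⇑D f g p x) hmul hD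
    (orderGE_mulTerm_of_homBound hmul hD hf hg y.1 x)
    (OrderGE.of_nonpos le_rfl : OrderGE gr 0 (h y.2))).le_of_gr_ne_zero hx
  simp only [coe_Icc, Set.mem_Icc, Prod.le_def]
  omega

theorem gr_mulTerm_pmulP_right (hgr : IsCompleteGrading gr) (hmul : IsGradedMul gr)
    (hD : RaisesDegree gr D) (f : ℤ → R) (hg : HomBound gr g dg) (hh : HomBound gr h dh)
    (m : ℕ) (y : ℤ × ℤ) :
    gr m (mulTerm ⇑D f (pmulP gr ⇑D g h) n y) =
      ∑ᶠ x, gr m (assocTermRight ⇑D f g h n y x) := by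
  rw [gr_mulTerm_congr_right (G' := fun q => ∑ x ∈ Finset.Icc (dg - m, dh - m)
      (y.2 + m - dh, y.2 + m - dg), mulTerm ⇑D g h q x) hmul hD
      fun μ hμ => gr_pmulP_eq_gr_sum hgr hmul hD hg hh y.2 hμ,
    mulTerm_sum_right, map_sum]
  refine (finsum_eq_sum_of_support_subset _ fun x hx => ?_).symm
  have := (orderGE_mulTerm (G := fun q => mulTerm ⇑D g h q x) hmul hD
    (OrderGE.of_nonpos le_rfl : OrderGE gr 0 (f y.1))
    (orderGE_mulTerm_of_homBound hmul hD hg hh y.2 x)).le_of_gr_ne_zero hx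
  simp only [coe_Icc, Set.mem_Icc, Prod.le_def]
  omega

theorem support_assocTermLeft_finite (hmul : IsGradedMul gr) (hD : RaisesDegree gr D)
    (hf : HomBound gr f df) (hg : HomBound gr g dg) (hh : HomBound gr h dh) (m : ℕ) :
    (support fun z : (ℤ × ℤ) × (ℤ × ℤ) => gr m (assocTermLeft ⇑D f g h n z.1 z.2)).Finite := by
  refine (Set.finite_Icc ((df + dg - m, dh - m), (df - m, dg - m))
    ((2 * n + 2 * m - df - dg - 2 * dh, n + m - df - dg),
      (n + m - dg - dh, n + m - df - dh))).subset ?_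
  rintro ⟨⟨p, k⟩, ⟨i, j⟩⟩ hz
  have hord := (orderGE_assocTermLeft hmul hD hf hg hh p k i j).le_of_gr_ne_zero hz
  have hnonneg : ¬(p + k - n < 0 ∨ i + j - p < 0) := fun hneg =>
    mem_support.1 hz (by simp only [assocTermLeft_eq_zero hneg, map_zero])
  simp only [Set.mem_Icc, Prod.le_def]
  omega

theorem support_assocTermRight_finite (hmul : IsGradedMul gr) (hD : RaisesDegree gr D)
    (hf : HomBound gr f df) (hg : HomBound gr g dg) (hh : HomBound gr h dh) (m : ℕ) :
    (support fun z : (ℤ × ℤ) × (ℤ × ℤ) => gr m (assocTermRight ⇑D f g h n z.1 z.2)).Finite := by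
  refine (Set.finite_Icc ((df - m, dg + dh - m), (dg - m, dh - m))
    ((n + m - dg - dh, 2 * n + 2 * m - 2 * df - dg - dh),
      (n + m - df - dh, n + m - df - dg))).subset ?_
  rintro ⟨⟨i, q⟩, ⟨j, k⟩⟩ hz
  have hord := (orderGE_assocTermRight hmul hD hf hg hh i q j k).le_of_gr_ne_zero hz
  have hnonneg : ¬(i + q - n < 0 ∨ j + k - q < 0) := fun hneg =>
    mem_support.1 hz (by simp only [assocTermRight_eq_zero hneg, map_zero])
  simp only [Set.mem_Icc, Prod.le_def]
  omega

theorem gr_pmulP_pmulP_left (hgr : IsCompleteGrading gr) (hmul : IsGradedMul gr)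
    (hD : RaisesDegree gr D) (hf : HomBound gr f df) (hg : HomBound gr g dg)
    (hh : HomBound gr h dh) (n : ℤ) (m : ℕ) :
    gr m (pmulP gr ⇑D (pmulP gr ⇑D f g) h n) =
      ∑ᶠ t : ℤ × ℤ × ℤ, gr m (∑ᶠ p, assocTermLeft ⇑D f g h n (p, t.2.2) (t.1, t.2.1)) := by
  let e : (ℤ × ℤ × ℤ) × ℤ ≃ (ℤ × ℤ) × (ℤ × ℤ) :=
    { toFun := fun c => ((c.2, c.1.2.2), (c.1.1, c.1.2.1))
      invFun := fun z => ((z.2.1, z.2.2, z.1.2), z.1.1)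
      left_inv := fun _ => rfl
      right_inv := fun _ => rfl }
  calc gr m (pmulP gr ⇑D (pmulP gr ⇑D f g) h n)
      = ∑ᶠ (y) (x), gr m (assocTermLeft ⇑D f g h n y x) := by
        rw [gr_pmulP hgr hmul hD (homBound_pmulP hgr hmul hD hf hg) hh, prodCoeff]
        simp only [prodTerm_eq_gr_mulTerm, gr_mulTerm_pmulP_left hgr hmul hD hf hg h m]
    _ = ∑ᶠ (t : ℤ × ℤ × ℤ) (p : ℤ), gr m (assocTermLeft ⇑D f g h n (p, t.2.2) (t.1, t.2.1)) :=
        finsum_finsum_eq_of_equiv e (support_assocTermLeft_finite hmul hD hf hg hh m)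
    _ = _ := by
        refine finsum_congr fun t => (map_finsum _ ((Set.finite_Icc (n - t.2.2)
          (t.1 + t.2.1)).subset fun p hp => ?_)).symm
        have := not_or.1 (mt assocTermLeft_eq_zero hp)
        simp only [Set.mem_Icc]
        omega

theorem gr_pmulP_pmulP_right (hgr : IsCompleteGrading gr) (hmul : IsGradedMul gr)
    (hD : RaisesDegree gr D) (hf : HomBound gr f df) (hg : HomBound gr g dg)
    (hh : HomBound gr h dh) (n : ℤ) (m : ℕ) :
    gr m (pmulP gr ⇑D f (pmulP gr ⇑D g h) n) =
      ∑ᶠ t : ℤ × ℤ × ℤ, gr m (∑ᶠ q, assocTermRight ⇑D f g h n (t.1, q) (t.2.1, t.2.2)) := by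
  let e : (ℤ × ℤ × ℤ) × ℤ ≃ (ℤ × ℤ) × (ℤ × ℤ) :=
    { toFun := fun c => ((c.1.1, c.2), (c.1.2.1, c.1.2.2))
      invFun := fun z => ((z.1.1, z.2.1, z.2.2), z.1.2)
      left_inv := fun _ => rfl
      right_inv := fun _ => rfl }
  calc gr m (pmulP gr ⇑D f (pmulP gr ⇑D g h) n)
      = ∑ᶠ (y) (x), gr m (assocTermRight ⇑D f g h n y x) := by
        rw [gr_pmulP hgr hmul hD hf (homBound_pmulP hgr hmul hD hg hh), prodCoeff]
        simp only [prodTerm_eq_gr_mulTerm, gr_mulTerm_pmulP_right hgr hmul hD f hg hh m]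
    _ = ∑ᶠ (t : ℤ × ℤ × ℤ) (q : ℤ), gr m (assocTermRight ⇑D f g h n (t.1, q) (t.2.1, t.2.2)) :=
        finsum_finsum_eq_of_equiv e (support_assocTermRight_finite hmul hD hf hg hh m)
    _ = _ := by
        refine finsum_congr fun t => (map_finsum _ ((Set.finite_Icc (n - t.1)
          (t.2.1 + t.2.2)).subset fun q hq => ?_)).symm
        have := not_or.1 (mt assocTermRight_eq_zero hq)
        simp only [Set.mem_Icc]
        omega

end Assoc

section Monomial

variable (D : Derivation ℤ R R) (f g h : ℤ → R) {n i j k : ℤ} {T : ℕ}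

theorem finsum_assocTermLeft (hT : i + j + k - n = T) :
    ∑ᶠ p, assocTermLeft ⇑D f g h n (p, k) (i, j) =
      ∑ x ∈ antidiagonal T,
        (zchoose (i + j - x.1) x.2 * zchoose i x.1) • (f i * D^[x.1] (g j) * D^[x.2] (h k)) := by
  have hsupp : support (fun p => assocTermLeft ⇑D f g h n (p, k) (i, j)) ⊆
      (antidiagonal T).image fun x => i + j - x.1 := by
    intro p hp
    have := not_or.1 (mt assocTermLeft_eq_zero hp)
    simp only [coe_image, Set.mem_image, mem_coe, HasAntidiagonal.mem_antidiagonal]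
    exact ⟨((i + j - p).toNat, (p + k - n).toNat), by omega, by omega⟩
  rw [finsum_eq_sum_of_support_subset _ hsupp, sum_image fun x hx x' hx' hxx' => by
    simp only [mem_coe, HasAntidiagonal.mem_antidiagonal] at hx hx'
    exact Prod.ext (by omega) (by omega)]
  refine sum_congr rfl fun x hx => ?_
  rw [HasAntidiagonal.mem_antidiagonal] at hx
  have hr : (i + j - (i + j - x.1)).toNat = x.1 := by omega
  have hs : (i + j - x.1 + k - n).toNat = x.2 := by omega
  simp only [assocTermLeft, mulTerm, hr, hs, if_pos (show 0 ≤ i + j - x.1 + k - n by omega),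
    if_pos (show 0 ≤ i + j - (i + j - x.1) by omega), smul_mul_assoc, smul_smul]

theorem finsum_assocTermRight (hT : i + j + k - n = T) :
    ∑ᶠ q, assocTermRight ⇑D f g h n (i, q) (j, k) =
      ∑ x ∈ antidiagonal T,
        (zchoose i x.1 * zchoose j x.2) • (f i * D^[x.1] (g j * D^[x.2] (h k))) := by
  have hsupp : support (fun q => assocTermRight ⇑D f g h n (i, q) (j, k)) ⊆
      (antidiagonal T).image fun x => j + k - x.2 := by
    intro q hq
    have := not_or.1 (mt assocTermRight_eq_zero hq)
    simp only [coe_image, Set.mem_image, mem_coe, HasAntidiagonal.mem_antidiagonal]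
    exact ⟨((i + q - n).toNat, (j + k - q).toNat), by omega, by omega⟩
  rw [finsum_eq_sum_of_support_subset _ hsupp, sum_image fun x hx x' hx' hxx' => by
    simp only [mem_coe, HasAntidiagonal.mem_antidiagonal] at hx hx'
    exact Prod.ext (by omega) (by omega)]
  refine sum_congr rfl fun x hx => ?_
  rw [HasAntidiagonal.mem_antidiagonal] at hx
  have hr : (i + (j + k - x.2) - n).toNat = x.1 := by omega
  have hs : (j + k - (j + k - x.2)).toNat = x.2 := by omega
  simp only [assocTermRight, mulTerm, hr, hs, if_pos (show 0 ≤ i + (j + k - x.2) - n by omega),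
    if_pos (show 0 ≤ j + k - (j + k - x.2) by omega), iterate_map_zsmul, mul_smul_comm,
    smul_smul]

theorem finsum_assocTermLeft_eq_right (n i j k : ℤ) :
    ∑ᶠ p, assocTermLeft ⇑D f g h n (p, k) (i, j) =
      ∑ᶠ q, assocTermRight ⇑D f g h n (i, q) (j, k) := by
  rcases lt_or_ge (i + j + k - n) 0 with hT | hT
  · rw [finsum_eq_zero_of_forall_eq_zero fun p => assocTermLeft_eq_zero (by omega),
      finsum_eq_zero_of_forall_eq_zero fun q => assocTermRight_eq_zero (by omega)]
  · obtain ⟨T, hT⟩ := Int.eq_ofNat_of_zero_le hT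
    rw [finsum_assocTermLeft D f g h hT, finsum_assocTermRight D f g h hT]
    exact D.sum_antidiagonal_choose_smul_assoc i j T _ _ _

end Monomial

theorem pmulP_assoc {f g h : ℤ → R} {df dg dh : ℤ} (hgr : IsCompleteGrading gr)
    (hmul : IsGradedMul gr) (hD : RaisesDegree gr D) (hf : HomBound gr f df)
    (hg : HomBound gr g dg) (hh : HomBound gr h dh) :
    pmulP gr ⇑D (pmulP gr ⇑D f g) h = pmulP gr ⇑D f (pmulP gr ⇑D g h) := by
  funext n
  refine hgr.sep _ _ fun m => ?_
  rw [gr_pmulP_pmulP_left hgr hmul hD hf hg hh, gr_pmulP_pmulP_right hgr hmul hD hf hg hh]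
  simp only [finsum_assocTermLeft_eq_right]

end TwoBKPPlus

open TwoBKPPlus in
theorem pdo_second_type_is_ring_general {R : Type*} [CommRing R]
    (gr : ℕ → R →+ R) (D : Derivation ℤ R R)
    -- the `gr m` are orthogonal idempotent projections (onto the `𝒜_m`) …
    (hidem : ∀ (m : ℕ) (a : R), gr m (gr m a) = gr m a)
    -- … which separate points (an element is determined by its components) …
    (hsep : ∀ a b : R, (∀ m : ℕ, gr m a = gr m b) → a = b)
    -- … and are jointly complete: every family of homogeneous components
    -- comes from an element of `R = Π_j 𝒜_j`
    (hcomplete : ∀ c : ℕ → R, (∀ m : ℕ, gr m (c m) = c m) → ∃ a : R, ∀ m, gr m a = c m)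
    -- the grading is multiplicative: `𝒜_i·𝒜_j ⊆ 𝒜_{i+j}`
    (hmul : ∀ (m : ℕ) (a b : R),
        gr m (a * b) = ∑ i ∈ Finset.range (m + 1), gr i a * gr (m - i) b)
    -- the derivation raises degrees by one: `D(𝒜_i) ⊆ 𝒜_{i+1}`
    (hD : ∀ (m : ℕ) (a : R), gr (m + 1) (D a) = D (gr m a))
    (hD0 : ∀ a : R, gr 0 (D a) = 0) :
    -- (1) for each power of `D` and each graded component only finitely many
    --     terms contribute
    (∀ f g : ℤ → R, IsPDOPlus gr f → IsPDOPlus gr g → ∀ (n : ℤ) (m : ℕ),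
        (Function.support (prodTerm gr ⇑D f g n m)).Finite) ∧
    -- (2) the multiplication is well defined on `𝒟⁺`, i.e. the graded
    --     components assemble to an element of `R`, and the product has the
    --     prescribed components
    (∀ f g : ℤ → R, IsPDOPlus gr f → IsPDOPlus gr g → ∀ n : ℤ,
        (∃ a : R, ∀ m : ℕ, gr m a = prodCoeff gr ⇑D f g n m) ∧
        (∀ m : ℕ, gr m (pmulP gr ⇑D f g n) = prodCoeff gr ⇑D f g n m)) ∧
    -- (3) `𝒟_k·𝒟_l ⊆ Π_{m ≥ k+l} 𝒟_m`  (in particular `𝒟⁺` is closed under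
    --     multiplication)
    (∀ (f g : ℤ → R) (k l : ℤ), HomBound gr f k → HomBound gr g l →
        HomBound gr (pmulP gr ⇑D f g) (k + l)) ∧
    -- (4) the multiplication is associative
    (∀ f g h : ℤ → R, IsPDOPlus gr f → IsPDOPlus gr g → IsPDOPlus gr h →
        pmulP gr ⇑D (pmulP gr ⇑D f g) h = pmulP gr ⇑D f (pmulP gr ⇑D g h)) ∧
    -- (5) `1·D⁰` is a two-sided unit
    (∀ f : ℤ → R, IsPDOPlus gr f →
        pmulP gr ⇑D ponep f = f ∧ pmulP gr ⇑D f ponep = f) ∧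
    -- (6) the multiplication distributes over (componentwise) addition,
    --     so `𝒟⁺` is a ring
    (∀ f g h : ℤ → R, IsPDOPlus gr f → IsPDOPlus gr g → IsPDOPlus gr h →
        pmulP gr ⇑D f (g + h) = pmulP gr ⇑D f g + pmulP gr ⇑D f h ∧
        pmulP gr ⇑D (f + g) h = pmulP gr ⇑D f h + pmulP gr ⇑D g h) := by
  have hgr : IsCompleteGrading gr := ⟨hidem, hsep, hcomplete⟩
  have hDeg : RaisesDegree gr D := ⟨hD, hD0⟩
  refine ⟨?_, ?_, ?_, ?_, ?_, ?_⟩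
  · rintro f g ⟨df, hf⟩ ⟨dg, hg⟩ n m
    exact support_prodTerm_finite hmul hDeg hf hg n m
  · rintro f g ⟨df, hf⟩ ⟨dg, hg⟩ n
    exact ⟨exists_gr_eq_prodCoeff hgr hmul hDeg hf hg n, gr_pmulP hgr hmul hDeg hf hg n⟩
  · exact fun f g k l hf hg => homBound_pmulP hgr hmul hDeg hf hg
  · rintro f g h ⟨df, hf⟩ ⟨dg, hg⟩ ⟨dh, hh⟩
    exact pmulP_assoc hgr hmul hDeg hf hg hh
  · rintro f ⟨df, hf⟩
    exact ⟨pmulP_ponep_left hgr hmul hDeg hf, pmulP_ponep_right hgr hmul hDeg hf⟩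
  · rintro f g h ⟨df, hf⟩ ⟨dg, hg⟩ ⟨dh, hh⟩
    exact ⟨pmulP_add_right hgr hmul hDeg hf hg hh, pmulP_add_left hgr hmul hDeg hf hg hh⟩

open TwoBKPPlus in
theorem pdo_second_type_is_ring {R : Type*} [CommRing R]
    (gr : ℕ → R →+ R) (D : Derivation ℤ R R)
    -- the `gr m` are orthogonal idempotent projections (onto the `𝒜_m`) …
    (hidem : ∀ (m : ℕ) (a : R), gr m (gr m a) = gr m a)
    (horth : ∀ (m m' : ℕ) (a : R), m ≠ m' → gr m (gr m' a) = 0)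
    -- … which separate points (an element is determined by its components) …
    (hsep : ∀ a b : R, (∀ m : ℕ, gr m a = gr m b) → a = b)
    -- … and are jointly complete: every family of homogeneous components
    -- comes from an element of `R = Π_j 𝒜_j`
    (hcomplete : ∀ c : ℕ → R, (∀ m : ℕ, gr m (c m) = c m) → ∃ a : R, ∀ m, gr m a = c m)
    -- `1 ∈ 𝒜_0`
    (hone : ∀ m : ℕ, gr m (1 : R) = if m = 0 then (1 : R) else 0)
    -- the grading is multiplicative: `𝒜_i·𝒜_j ⊆ 𝒜_{i+j}`
    (hmul : ∀ (m : ℕ) (a b : R),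
        gr m (a * b) = ∑ i ∈ Finset.range (m + 1), gr i a * gr (m - i) b)
    -- the derivation raises degrees by one: `D(𝒜_i) ⊆ 𝒜_{i+1}`
    (hD : ∀ (m : ℕ) (a : R), gr (m + 1) (D a) = D (gr m a))
    (hD0 : ∀ a : R, gr 0 (D a) = 0) :
    -- (1) for each power of `D` and each graded component only finitely many
    --     terms contribute
    (∀ f g : ℤ → R, IsPDOPlus gr f → IsPDOPlus gr g → ∀ (n : ℤ) (m : ℕ),
        (Function.support (prodTerm gr ⇑D f g n m)).Finite) ∧
    -- (2) the multiplication is well defined on `𝒟⁺`, i.e. the graded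
    --     components assemble to an element of `R`, and the product has the
    --     prescribed components
    (∀ f g : ℤ → R, IsPDOPlus gr f → IsPDOPlus gr g → ∀ n : ℤ,
        (∃ a : R, ∀ m : ℕ, gr m a = prodCoeff gr ⇑D f g n m) ∧
        (∀ m : ℕ, gr m (pmulP gr ⇑D f g n) = prodCoeff gr ⇑D f g n m)) ∧
    -- (3) `𝒟_k·𝒟_l ⊆ Π_{m ≥ k+l} 𝒟_m`  (in particular `𝒟⁺` is closed under
    --     multiplication)
    (∀ (f g : ℤ → R) (k l : ℤ), HomBound gr f k → HomBound gr g l →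
        HomBound gr (pmulP gr ⇑D f g) (k + l)) ∧
    -- (4) the multiplication is associative
    (∀ f g h : ℤ → R, IsPDOPlus gr f → IsPDOPlus gr g → IsPDOPlus gr h →
        pmulP gr ⇑D (pmulP gr ⇑D f g) h = pmulP gr ⇑D f (pmulP gr ⇑D g h)) ∧
    -- (5) `1·D⁰` is a two-sided unit
    (∀ f : ℤ → R, IsPDOPlus gr f →
        pmulP gr ⇑D ponep f = f ∧ pmulP gr ⇑D f ponep = f) ∧
    -- (6) the multiplication distributes over (componentwise) addition,
    --     so `𝒟⁺` is a ring
    (∀ f g h : ℤ → R, IsPDOPlus gr f → IsPDOPlus gr g → IsPDOPlus gr h →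
        pmulP gr ⇑D f (g + h) = pmulP gr ⇑D f g + pmulP gr ⇑D f h ∧
        pmulP gr ⇑D (f + g) h = pmulP gr ⇑D f h + pmulP gr ⇑D g h) :=
  pdo_second_type_is_ring_general gr D hidem hsep hcomplete hmul hD hD0
end

section
/- On the ring 𝒟⁻ of pseudo-differential operators over a commutative differential ring (𝒜, D), viewed as a Lie algebra under the commutator [X,Y] = XY − YX, the linear map R(X) = X₊ − X₋ satisfies the modified Yang–Baxter equation: [R(X),R(Y)] − R([R(X),Y] + [X,R(Y)]) = −[X,Y] for all X, Y ∈ 𝒟⁻. Consequently [X,Y]_R := [R(X),Y] + [X,R(Y)] is a second Lie bracket on 𝒟⁻. -/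
/-!
Pseudo-differential operators of the first type `𝒟⁻` over a commutative
differential ring `(𝒜, D)`.  An operator `A = Σ_{i ∈ ℤ} f_i D^i` (with
`f_i = 0` for all sufficiently large `i`) is encoded by its coefficient
function `f : ℤ → 𝒜`.  Multiplication is determined by
`(f D^i)·(g D^j) = Σ_{r ≥ 0} binom(i,r) f D^r(g) D^{i+j-r}`.
-/

namespace TwoBKP

/-- The generalized binomial coefficient `binom(i,r) = i(i−1)⋯(i−r+1)/r! ∈ ℤ`
for an integer upper index `i` and `r : ℕ`. -/
noncomputable def zchoose (i : ℤ) (r : ℕ) : ℤ := Ring.choose i r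

variable {A : Type*} [CommRing A]

/-- `f : ℤ → 𝒜` represents an element of `𝒟⁻` iff its support is bounded above. -/
def IsPDO (f : ℤ → A) : Prop := ∃ N : ℤ, ∀ i : ℤ, N < i → f i = 0

/-- The product in `𝒟⁻`, coefficientwise: the coefficient of `D^n` in `A·B` is
`Σ_{i+j-r=n, r≥0} binom(i,r) f_i D^r(g_j)`. -/
noncomputable def pmul (D : A → A) (f g : ℤ → A) : ℤ → A := fun n =>
  ∑ᶠ p : ℤ × ℤ,
    if 0 ≤ p.1 + p.2 - n then
      zchoose p.1 (p.1 + p.2 - n).toNat • (f p.1 * D^[(p.1 + p.2 - n).toNat] (g p.2))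
    else 0

/-- The unit `1 = 1·D⁰` of `𝒟⁻`. -/
def pone : ℤ → A := fun n => if n = 0 then (1 : A) else 0

/-- The monomial `D^k` (in particular `pD 1 = D` and `pD (-1) = D⁻¹`). -/
def pD (k : ℤ) : ℤ → A := fun n => if n = k then (1 : A) else 0

/-- The multiplication operator `a·D⁰` attached to `a ∈ 𝒜`. -/
def sc (a : A) : ℤ → A := fun n => if n = 0 then a else 0

/-- The nonnegative (differential-operator) part `A₊ = Σ_{i≥0} f_i D^i`. -/
def posPart (f : ℤ → A) : ℤ → A := fun n => if 0 ≤ n then f n else 0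

/-- The negative part `A₋ = Σ_{i<0} f_i D^i`. -/
def negPart (f : ℤ → A) : ℤ → A := fun n => if n < 0 then f n else 0

/-- The residue `res A = f_{-1}`. -/
def res (f : ℤ → A) : A := f (-1)

/-- The adjoint `A* = Σ_i (−D)^i ∘ f_i` computed in `𝒟⁻`, coefficientwise:
the coefficient of `D^n` in `A*` is `Σ_{i ≥ n} (−1)^i binom(i, i−n) D^{i−n}(f_i)`. -/
noncomputable def adj (D : A → A) (f : ℤ → A) : ℤ → A := fun n =>
  ∑ᶠ i : ℤ,
    if 0 ≤ i - n then
      ((-1 : ℤ) ^ i.natAbs * zchoose i (i - n).toNat) • D^[(i - n).toNat] (f i)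
    else 0

/-- Powers in `𝒟⁻`. -/
noncomputable def ppow (D : A → A) (f : ℤ → A) : ℕ → ℤ → A
  | 0 => pone
  | k + 1 => pmul D f (ppow D f k)

/-- The action of a differential operator `Σ_{i≥0} f_i D^i` on an element of `𝒜`. -/
noncomputable def papply (D : A → A) (f : ℤ → A) (a : A) : A :=
  ∑ᶠ i : ℤ, if 0 ≤ i then f i * D^[i.toNat] a else 0

/-- Conjugation by `D`:  `A ↦ D·A·D⁻¹`. -/
noncomputable def conjD (D : A → A) (f : ℤ → A) : ℤ → A :=
  pmul D (pD 1) (pmul D f (pD (-1)))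

end TwoBKP

namespace TwoBKP

variable {A : Type*} [CommRing A]

/-- The standard `R`-matrix `R(X) = X₊ − X₋` on `𝒟⁻`. -/
def rMat (f : ℤ → A) : ℤ → A := posPart f - negPart f

/-- The commutator bracket on `𝒟⁻`. -/
noncomputable def brk (D : A → A) (f g : ℤ → A) : ℤ → A := pmul D f g - pmul D g f

/-- The `R`-bracket `[X,Y]_R = [R X, Y] + [X, R Y]` on `𝒟⁻`. -/
noncomputable def brkR (D : A → A) (f g : ℤ → A) : ℤ → A :=
  brk D (rMat f) g + brk D f (rMat g)

end TwoBKP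

/-!
`𝒟⁻` is the direct sum of the subalgebras `(𝒟⁻)₊` and `(𝒟⁻)₋`, and `R = P₊ − P₋`. Bilinearity of
the commutator alone gives `[X,Y]_R = 2[X₊,Y₊] − 2[X₋,Y₋]`, whose two terms lie in `(𝒟⁻)₊` and
`(𝒟⁻)₋` respectively; hence `R[X,Y]_R = 2[X₊,Y₊] + 2[X₋,Y₋]`, and the modified Yang–Baxter equation
is the expansion of `[X,Y]` into its four mixed brackets. Applying the formula twice gives
`[X,[Y,Z]_R]_R = 4[X₊,[Y₊,Z₊]] + 4[X₋,[Y₋,Z₋]]`, so the Jacobi identity for `[·,·]_R` reduces to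
the one for the commutator, that is, to associativity of the product.

Associativity is checked coefficientwise. With `W = i + j + k − n`, the coefficient of
`f_i D^p(g_j) D^{W−p}(h_k)` in `((f g) h)_n` is `C(i,p) C(i+j−p, W−p)`, while in `(f (g h))_n`,
after the Leibniz rule, it is `Σ_s C(i,W−s) C(j,s) C(W−s,p)`; the two agree by Chu–Vandermonde.
-/

open Finset Filter

section IteratedDerivation

variable {R A : Type*} [CommSemiring R] [CommSemiring A] [Algebra R A] (D : Derivation R A A)

theorem Derivation.iterate_eq_pow (r : ℕ) : (⇑D)^[r] = ⇑((D : A →ₗ[R] A) ^ r) :=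
  (Module.End.coe_pow _ r).symm

theorem Derivation.iterate_apply_mul (r : ℕ) (a b : A) :
    (⇑D)^[r] (a * b) = ∑ s ∈ range (r + 1), r.choose s • ((⇑D)^[s] a * (⇑D)^[r - s] b) := by
  rw [← Nat.sum_antidiagonal_eq_sum_range_succ (fun i j => r.choose i • ((⇑D)^[i] a * (⇑D)^[j] b))]
  induction r with
  | zero => simp
  | succ n ih =>
    rw [sum_antidiagonal_choose_succ_nsmul (fun i j => (⇑D)^[i] a * (⇑D)^[j] b) n]
    simp only [Function.iterate_succ_apply', ih, map_sum, map_nsmul, Derivation.leibniz,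
      smul_eq_mul, smul_add, sum_add_distrib]
    congr 1
    refine sum_congr rfl fun ⟨i, j⟩ hij ↦ ?_
    rw [n.choose_symm_of_eq_add (mem_antidiagonal.1 hij).symm, mul_comm]

end IteratedDerivation

theorem Ring.sum_choose_mul_choose_mul_choose {R : Type*} [CommRing R] [BinomialRing R]
    (i j : R) {W a : ℕ} (ha : a ≤ W) :
    ∑ s ∈ range (W + 1), Ring.choose i (W - s) * Ring.choose j s * ((W - s).choose a) =
      Ring.choose i a * Ring.choose (i + j - a) (W - a) := by
  have vanish : ∀ s ∈ range (W + 1), s ∉ range (W - a + 1) →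
      Ring.choose i (W - s) * Ring.choose j s * ((W - s).choose a) = 0 := fun s hsW hs => by
    rw [mem_range, not_lt] at hs
    rw [mem_range] at hsW
    rw [Nat.choose_eq_zero_of_lt (by omega), Nat.cast_zero, mul_zero]
  rw [← sum_subset (range_subset_range.2 (by omega)) vanish, add_sub_right_comm,
    Ring.add_choose_eq _ (Commute.all _ _), Nat.sum_antidiagonal_eq_sum_range_succ
      (fun u v => Ring.choose (i - a) u * Ring.choose j v), mul_sum, ← sum_range_reflect]
  refine sum_congr rfl fun s hs => ?_
  have hs : s ≤ W - a := Nat.lt_succ_iff.1 (mem_range.1 hs)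
  have key := Ring.choose_smul_choose i (n := a + s) (k := a) (by omega)
  rw [nsmul_eq_mul, Nat.add_sub_cancel_left] at key
  rw [show W - (W - a + 1 - 1 - s) = a + s by omega, show W - a + 1 - 1 - s = W - a - s by omega,
    ← mul_assoc, ← key]
  ring

namespace TwoBKP

variable {A : Type*} [CommRing A]

section Support

variable {f g : ℤ → A}

theorem le_of_apply_ne_zero {N i : ℤ} (hf : ∀ i, N < i → f i = 0) (hi : f i ≠ 0) : i ≤ N :=
  not_lt.1 (mt (hf i) hi)

theorem IsPDO.eventually_bound (hf : IsPDO f) : ∀ᶠ N in atTop, ∀ i, N < i → f i = 0 := by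
  obtain ⟨N, hN⟩ := hf
  exact eventually_atTop.2 ⟨N, fun M hM i hi => hN i (by omega)⟩

theorem IsPDO.add (hf : IsPDO f) (hg : IsPDO g) : IsPDO (f + g) := by
  obtain ⟨N, hfN, hgN⟩ := (hf.eventually_bound.and hg.eventually_bound).exists
  exact ⟨N, fun i hi => by simp [hfN i hi, hgN i hi]⟩

theorem IsPDO.neg (hf : IsPDO f) : IsPDO (-f) := by
  obtain ⟨N, hN⟩ := hf
  exact ⟨N, fun i hi => by simp [hN i hi]⟩

theorem IsPDO.sub (hf : IsPDO f) (hg : IsPDO g) : IsPDO (f - g) :=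
  sub_eq_add_neg f g ▸ hf.add hg.neg

theorem IsPDO.posPart (hf : IsPDO f) : IsPDO (posPart f) := by
  obtain ⟨N, hN⟩ := hf
  exact ⟨N, fun i hi => by simp [TwoBKP.posPart, hN i hi]⟩

theorem IsPDO.negPart (hf : IsPDO f) : IsPDO (negPart f) := by
  obtain ⟨N, hN⟩ := hf
  exact ⟨N, fun i hi => by simp [TwoBKP.negPart, hN i hi]⟩

theorem IsPDO.rMat (hf : IsPDO f) : IsPDO (rMat f) := hf.posPart.sub hf.negPart

theorem posPart_add_negPart (f : ℤ → A) : posPart f + negPart f = f := by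
  funext n
  by_cases hn : 0 ≤ n <;> simp [TwoBKP.posPart, TwoBKP.negPart, hn, not_lt.2, lt_of_not_ge]

theorem posPart_rMat (f : ℤ → A) : posPart (rMat f) = posPart f := by
  funext n
  by_cases hn : 0 ≤ n <;> simp [TwoBKP.posPart, TwoBKP.negPart, rMat, hn, not_lt.2]

theorem negPart_rMat (f : ℤ → A) : negPart (rMat f) = -negPart f := by
  funext n
  by_cases hn : n < 0 <;> simp [TwoBKP.posPart, TwoBKP.negPart, rMat, hn, not_le.2]

end Support

theorem zchoose_eq_zero_of_lt {i : ℤ} {r : ℕ} (h0 : 0 ≤ i) (h : i < r) : zchoose i r = 0 := by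
  lift i to ℕ using h0
  rw [zchoose, Ring.choose_natCast, Nat.choose_eq_zero_of_lt (by omega), Nat.cast_zero]

section Product

variable (D : Derivation ℤ A A) {f g h : ℤ → A}

noncomputable def pmulTerm (D : A → A) (f g : ℤ → A) (n : ℤ) (p : ℤ × ℤ) : A :=
  if 0 ≤ p.1 + p.2 - n then
    zchoose p.1 (p.1 + p.2 - n).toNat • (f p.1 * D^[(p.1 + p.2 - n).toNat] (g p.2))
  else 0

theorem ne_zero_of_pmulTerm_ne_zero {n : ℤ} {p : ℤ × ℤ} (h : pmulTerm D f g n p ≠ 0) :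
    f p.1 ≠ 0 ∧ g p.2 ≠ 0 ∧ n ≤ p.1 + p.2 := by
  refine ⟨fun hf => h ?_, fun hg => h ?_, not_lt.1 fun hn => h (if_neg (by omega))⟩ <;>
    simp [pmulTerm, *, iterate_map_zero]

theorem pmul_apply_eq_sum {n : ℤ} {S : Finset (ℤ × ℤ)}
    (hS : ∀ p : ℤ × ℤ, f p.1 ≠ 0 → g p.2 ≠ 0 → n ≤ p.1 + p.2 → p ∈ S) :
    pmul D f g n = ∑ p ∈ S, pmulTerm D f g n p :=
  finsum_eq_sum_of_support_subset _ fun p hp =>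
    let ⟨hf, hg, hn⟩ := ne_zero_of_pmulTerm_ne_zero D hp
    hS p hf hg hn

theorem pmul_apply_eq_sum_Icc {N : ℤ} (hf : ∀ i, N < i → f i = 0) (hg : ∀ i, N < i → g i = 0)
    (n : ℤ) : pmul D f g n = ∑ p ∈ Icc (n - N) N ×ˢ Icc (n - N) N, pmulTerm D f g n p :=
  pmul_apply_eq_sum D fun p hfp hgp hn => by
    have := le_of_apply_ne_zero hf hfp; have := le_of_apply_ne_zero hg hgp
    simp only [mem_product, mem_Icc]
    omega

theorem pmul_apply_eq_zero_of_lt {Nf Ng n : ℤ} (hf : ∀ i, Nf < i → f i = 0)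
    (hg : ∀ i, Ng < i → g i = 0) (hn : Nf + Ng < n) : pmul D f g n = 0 := by
  rw [pmul_apply_eq_sum D (S := ∅), sum_empty]
  intro p hfp hgp _
  have := le_of_apply_ne_zero hf hfp; have := le_of_apply_ne_zero hg hgp
  omega

theorem IsPDO.pmul (hf : IsPDO f) (hg : IsPDO g) : IsPDO (pmul D f g) :=
  let ⟨Nf, hNf⟩ := hf
  let ⟨Ng, hNg⟩ := hg
  ⟨Nf + Ng, fun _ => pmul_apply_eq_zero_of_lt D hNf hNg⟩

theorem pmul_apply_eq_zero_of_neg {n : ℤ} (hf : ∀ i < 0, f i = 0) (hg : ∀ i < 0, g i = 0)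
    (hn : n < 0) : pmul D f g n = 0 := by
  refine finsum_eq_zero_of_forall_eq_zero fun p => ?_
  change pmulTerm D f g n p = 0
  by_contra hp
  obtain ⟨hfp, hgp, -⟩ := ne_zero_of_pmulTerm_ne_zero D hp
  have := not_lt.1 (mt (hf p.1) hfp); have := not_lt.1 (mt (hg p.2) hgp)
  -- both orders are `≥ 0`, so `C(i, i + j - n) = 0` because `i + j - n > i`
  exact hp (by rw [pmulTerm, if_pos (by omega), zchoose_eq_zero_of_lt (by omega) (by omega),
    zero_smul])

theorem pmul_apply_eq_zero_of_nonneg {n : ℤ} (hf : ∀ i ≥ 0, f i = 0) (hg : ∀ i ≥ 0, g i = 0)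
    (hn : 0 ≤ n) : pmul D f g n = 0 := by
  refine finsum_eq_zero_of_forall_eq_zero fun p => by_contra fun hp => ?_
  obtain ⟨hfp, hgp, hnp⟩ := ne_zero_of_pmulTerm_ne_zero D hp
  have := not_le.1 (mt (hf p.1) hfp); have := not_le.1 (mt (hg p.2) hgp)
  omega

end Product

section Bilinear

variable (D : Derivation ℤ A A) {f f₁ f₂ g g₁ g₂ : ℤ → A}

-- `pmul` is a `finsum`, which is zero on infinite supports: additivity needs bounded supports.
theorem pmul_add_left (hf₁ : IsPDO f₁) (hf₂ : IsPDO f₂) (hg : IsPDO g) :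
    pmul D (f₁ + f₂) g = pmul D f₁ g + pmul D f₂ g := by
  obtain ⟨N, h₁, h₂, hg⟩ :=
    (hf₁.eventually_bound.and (hf₂.eventually_bound.and hg.eventually_bound)).exists
  have h : ∀ i, N < i → (f₁ + f₂) i = 0 := fun i hi => by simp [h₁ i hi, h₂ i hi]
  funext n
  rw [Pi.add_apply, pmul_apply_eq_sum_Icc D h hg, pmul_apply_eq_sum_Icc D h₁ hg,
    pmul_apply_eq_sum_Icc D h₂ hg, ← sum_add_distrib]
  refine sum_congr rfl fun p _ => ?_
  unfold pmulTerm
  split_ifs <;> simp only [Pi.add_apply, add_mul, smul_add, add_zero]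

theorem pmul_add_right (hf : IsPDO f) (hg₁ : IsPDO g₁) (hg₂ : IsPDO g₂) :
    pmul D f (g₁ + g₂) = pmul D f g₁ + pmul D f g₂ := by
  obtain ⟨N, hf, h₁, h₂⟩ :=
    (hf.eventually_bound.and (hg₁.eventually_bound.and hg₂.eventually_bound)).exists
  have h : ∀ i, N < i → (g₁ + g₂) i = 0 := fun i hi => by simp [h₁ i hi, h₂ i hi]
  funext n
  rw [Pi.add_apply, pmul_apply_eq_sum_Icc D hf h, pmul_apply_eq_sum_Icc D hf h₁,
    pmul_apply_eq_sum_Icc D hf h₂, ← sum_add_distrib]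
  refine sum_congr rfl fun p _ => ?_
  unfold pmulTerm
  split_ifs <;> simp only [Pi.add_apply, iterate_map_add, mul_add, smul_add, add_zero]

theorem pmul_neg_left (f g : ℤ → A) : pmul D (-f) g = -pmul D f g := by
  funext n
  refine (finsum_congr fun p => ?_).trans (finsum_neg_distrib _)
  split_ifs <;> simp only [Pi.neg_apply, neg_mul, smul_neg, neg_zero]

theorem pmul_neg_right (f g : ℤ → A) : pmul D f (-g) = -pmul D f g := by
  funext n
  refine (finsum_congr fun p => ?_).trans (finsum_neg_distrib _)
  split_ifs <;> simp only [Pi.neg_apply, iterate_map_neg, mul_neg, smul_neg, neg_zero]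

theorem pmul_sub_left (hf₁ : IsPDO f₁) (hf₂ : IsPDO f₂) (hg : IsPDO g) :
    pmul D (f₁ - f₂) g = pmul D f₁ g - pmul D f₂ g := by
  rw [sub_eq_add_neg, pmul_add_left D hf₁ hf₂.neg hg, pmul_neg_left, ← sub_eq_add_neg]

theorem pmul_sub_right (hf : IsPDO f) (hg₁ : IsPDO g₁) (hg₂ : IsPDO g₂) :
    pmul D f (g₁ - g₂) = pmul D f g₁ - pmul D f g₂ := by
  rw [sub_eq_add_neg, pmul_add_right D hf hg₁ hg₂.neg, pmul_neg_right, ← sub_eq_add_neg]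

end Bilinear

section Associativity

variable (D : Derivation ℤ A A) {f g h : ℤ → A}

/-- The term of `((f * g) * h)_n` coming from `f_i D^i`, `g_j D^j`, `h_k D^k`, where `m` is the
order of the intermediate term of `f * g`. -/
noncomputable def assocTermLeft (D : A → A) (f g h : ℤ → A) (n i j k m : ℤ) : A :=
  if 0 ≤ m + k - n then
    if 0 ≤ i + j - m then
      (zchoose m (m + k - n).toNat * zchoose i (i + j - m).toNat) •
        (f i * D^[(i + j - m).toNat] (g j) * D^[(m + k - n).toNat] (h k))
    else 0
  else 0

/-- The term of `(f * (g * h))_n` coming from `f_i D^i`, `g_j D^j`, `h_k D^k`, where `m` is the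
order of the intermediate term of `g * h`; the Leibniz rule is already expanded. -/
noncomputable def assocTermRight (D : A → A) (f g h : ℤ → A) (n i j k m : ℤ) : A :=
  if 0 ≤ i + m - n then
    if 0 ≤ j + k - m then
      ∑ a ∈ range ((i + m - n).toNat + 1),
        (zchoose i (i + m - n).toNat * zchoose j (j + k - m).toNat *
          ((i + m - n).toNat.choose a)) •
          (f i * D^[a] (g j) * D^[(i + m - n).toNat - a + (j + k - m).toNat] (h k))
    else 0
  else 0

theorem ne_zero_of_assocTermLeft_ne_zero {n i j k m : ℤ}
    (hA : assocTermLeft D f g h n i j k m ≠ 0) :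
    f i ≠ 0 ∧ g j ≠ 0 ∧ h k ≠ 0 ∧ n ≤ m + k ∧ m ≤ i + j := by
  unfold assocTermLeft at hA
  split_ifs at hA
  · refine ⟨?_, ?_, ?_, by omega, by omega⟩ <;> rintro h0 <;> simp [h0, iterate_map_zero] at hA
  all_goals exact absurd rfl hA

theorem ne_zero_of_assocTermRight_ne_zero {n i j k m : ℤ}
    (hB : assocTermRight D f g h n i j k m ≠ 0) :
    f i ≠ 0 ∧ g j ≠ 0 ∧ h k ≠ 0 ∧ n ≤ i + m ∧ m ≤ j + k := by
  unfold assocTermRight at hB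
  split_ifs at hB
  · refine ⟨?_, ?_, ?_, by omega, by omega⟩ <;> rintro h0 <;> simp [h0, iterate_map_zero] at hB
  all_goals exact absurd rfl hB

theorem sum_assocTermLeft {n i j k : ℤ} {W : ℕ} (hW : (W : ℤ) = i + j + k - n) {G : Finset ℤ}
    (hG : Icc (n - k) (i + j) ⊆ G) :
    ∑ m ∈ G, assocTermLeft D f g h n i j k m =
      ∑ p ∈ range (W + 1), (zchoose i p * zchoose (i + j - p) (W - p)) •
        (f i * (⇑D)^[p] (g j) * (⇑D)^[W - p] (h k)) := by
  rw [← sum_subset hG fun m _ hm => by_contra fun hA => hm ?_]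
  · refine (sum_nbij' (fun p : ℕ => i + j - p) (fun m => (i + j - m).toNat)
      (fun p hp => by simp only [mem_Icc, mem_range] at hp ⊢; omega)
      (fun m hm => by simp only [mem_Icc, mem_range] at hm ⊢; omega)
      (fun p hp => by simp only [mem_range] at hp; omega)
      (fun m hm => by simp only [mem_Icc] at hm; omega)
      fun _ _ => rfl).symm.trans (sum_congr rfl fun p hp => ?_)
    rw [mem_range] at hp
    rw [assocTermLeft, if_pos (by omega), if_pos (by omega), mul_comm,
      show (i + j - p + k - n).toNat = W - p by omega,
      show (i + j - (i + j - (p : ℤ))).toNat = p by omega]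
  · obtain ⟨-, -, -, h₁, h₂⟩ := ne_zero_of_assocTermLeft_ne_zero D hA
    exact mem_Icc.2 ⟨by omega, h₂⟩

theorem sum_assocTermRight {n i j k : ℤ} {W : ℕ} (hW : (W : ℤ) = i + j + k - n) {G : Finset ℤ}
    (hG : Icc (n - i) (j + k) ⊆ G) :
    ∑ m ∈ G, assocTermRight D f g h n i j k m =
      ∑ p ∈ range (W + 1),
        (∑ s ∈ range (W + 1), zchoose i (W - s) * zchoose j s * ((W - s).choose p)) •
          (f i * (⇑D)^[p] (g j) * (⇑D)^[W - p] (h k)) := by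
  rw [← sum_subset hG fun m _ hm => by_contra fun hB => hm ?_]
  · refine (sum_nbij' (s := range (W + 1)) (fun s : ℕ => j + k - s) (fun m => (j + k - m).toNat)
      (fun s hs => by simp only [mem_Icc, mem_range] at hs ⊢; omega)
      (fun m hm => by simp only [mem_Icc, mem_range] at hm ⊢; omega)
      (fun s hs => by simp only [mem_range] at hs; omega)
      (fun m hm => by simp only [mem_Icc] at hm; omega)
      fun _ _ => rfl).symm.trans ?_
    simp only [sum_smul]
    rw [sum_comm]
    refine sum_congr rfl fun s hs => ?_
    rw [mem_range] at hs
    rw [assocTermRight, if_pos (by omega), if_pos (by omega),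
      show (i + (j + k - s) - n).toNat = W - s by omega,
      show (j + k - (j + k - (s : ℤ))).toNat = s by omega]
    refine (sum_congr rfl fun p hp => ?_).trans
      (sum_subset (range_subset_range.2 (by omega)) fun p _ hp => ?_)
    · rw [mem_range] at hp
      rw [show W - s - p + s = W - p by omega]
    · rw [mem_range] at hp
      rw [Nat.choose_eq_zero_of_lt (by omega), Nat.cast_zero, mul_zero, zero_smul]
  · obtain ⟨-, -, -, h₁, h₂⟩ := ne_zero_of_assocTermRight_ne_zero D hB
    exact mem_Icc.2 ⟨by omega, h₂⟩

theorem sum_assocTermLeft_eq_sum_assocTermRight {n i j k : ℤ} {G : Finset ℤ}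
    (hL : Icc (n - k) (i + j) ⊆ G) (hR : Icc (n - i) (j + k) ⊆ G) :
    ∑ m ∈ G, assocTermLeft D f g h n i j k m = ∑ m ∈ G, assocTermRight D f g h n i j k m := by
  rcases lt_or_ge (i + j + k) n with hn | hn
  · refine (sum_eq_zero fun m _ => by_contra fun hA => ?_).trans
      (sum_eq_zero fun m _ => by_contra fun hB => ?_).symm
    · obtain ⟨-, -, -, _, _⟩ := ne_zero_of_assocTermLeft_ne_zero D hA
      omega
    · obtain ⟨-, -, -, _, _⟩ := ne_zero_of_assocTermRight_ne_zero D hB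
      omega
  · obtain ⟨W, hW⟩ := Int.eq_ofNat_of_zero_le (sub_nonneg.2 hn)
    rw [sum_assocTermLeft D hW.symm hL, sum_assocTermRight D hW.symm hR]
    refine sum_congr rfl fun p hp => ?_
    simp only [zchoose]
    rw [Ring.sum_choose_mul_choose_mul_choose i j (Nat.lt_succ_iff.1 (mem_range.1 hp))]

theorem pmul_pmul_apply_eq_sum_assocTermLeft {N : ℤ} (hf : ∀ i, N < i → f i = 0)
    (hg : ∀ i, N < i → g i = 0) (hh : ∀ i, N < i → h i = 0) (n : ℤ) :
    pmul D (pmul D f g) h n =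
      ∑ x ∈ Icc (n - 2 * N) N ×ˢ Icc (n - 2 * N) N ×ˢ Icc (n - 2 * N) N ×ˢ Icc (n - N) (2 * N),
        assocTermLeft D f g h n x.1 x.2.1 x.2.2.1 x.2.2.2 := by
  have hfg : ∀ m, N + N < m → pmul D f g m = 0 := fun m => pmul_apply_eq_zero_of_lt D hf hg
  have expand : ∀ m ∈ Icc (n - N) (2 * N), ∀ k, pmulTerm D (pmul D f g) h n (m, k) =
      ∑ q ∈ Icc (n - 2 * N) N ×ˢ Icc (n - 2 * N) N, assocTermLeft D f g h n q.1 q.2 k m := by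
    intro m hm k
    rw [mem_Icc] at hm
    unfold pmulTerm
    split_ifs with hmk
    · rw [pmul_apply_eq_sum D (S := Icc (n - 2 * N) N ×ˢ Icc (n - 2 * N) N) fun q h₁ h₂ hq => ?_,
        sum_mul, smul_sum]
      · refine sum_congr rfl fun q _ => ?_
        rw [pmulTerm, assocTermLeft, if_pos hmk]
        split_ifs
        · rw [smul_mul_assoc, smul_smul]
        · rw [zero_mul, smul_zero]
      · have := le_of_apply_ne_zero hf h₁; have := le_of_apply_ne_zero hg h₂
        simp only [mem_product, mem_Icc]
        omega
    · exact (sum_eq_zero fun q _ => if_neg hmk).symm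
  rw [pmul_apply_eq_sum D (S := Icc (n - N) (2 * N) ×ˢ Icc (n - 2 * N) N) fun p h₁ h₂ hp => ?_]
  · rw [sum_congr rfl fun p hp => expand p.1 (mem_product.1 hp).1 p.2, ← sum_product']
    refine sum_nbij' (fun x => (x.2.1, x.2.2, x.1.2, x.1.1))
      (fun x => ((x.2.2.2, x.2.2.1), x.1, x.2.1)) ?_ ?_
      (fun _ _ => rfl) (fun _ _ => rfl) (fun _ _ => rfl) <;>
    · intro x hx
      simp only [mem_product] at hx ⊢
      tauto
  · have := le_of_apply_ne_zero hfg h₁; have := le_of_apply_ne_zero hh h₂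
    simp only [mem_product, mem_Icc]
    omega

theorem pmul_pmul_apply_eq_sum_assocTermRight {N : ℤ} (hf : ∀ i, N < i → f i = 0)
    (hg : ∀ i, N < i → g i = 0) (hh : ∀ i, N < i → h i = 0) (n : ℤ) :
    pmul D f (pmul D g h) n =
      ∑ x ∈ Icc (n - 2 * N) N ×ˢ Icc (n - 2 * N) N ×ˢ Icc (n - 2 * N) N ×ˢ Icc (n - N) (2 * N),
        assocTermRight D f g h n x.1 x.2.1 x.2.2.1 x.2.2.2 := by
  have hgh : ∀ m, N + N < m → pmul D g h m = 0 := fun m => pmul_apply_eq_zero_of_lt D hg hh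
  have expand : ∀ i, ∀ m ∈ Icc (n - N) (2 * N), pmulTerm D f (pmul D g h) n (i, m) =
      ∑ q ∈ Icc (n - 2 * N) N ×ˢ Icc (n - 2 * N) N, assocTermRight D f g h n i q.1 q.2 m := by
    intro i m hm
    rw [mem_Icc] at hm
    unfold pmulTerm
    split_ifs with him
    · rw [pmul_apply_eq_sum D (S := Icc (n - 2 * N) N ×ˢ Icc (n - 2 * N) N) fun q h₁ h₂ hq => ?_,
        D.iterate_eq_pow, map_sum, mul_sum, smul_sum]
      · refine sum_congr rfl fun q _ => ?_
        rw [← D.iterate_eq_pow, pmulTerm, assocTermRight, if_pos him]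
        split_ifs
        · rw [iterate_map_zsmul, D.iterate_apply_mul, smul_sum, mul_sum, smul_sum]
          refine sum_congr rfl fun a _ => ?_
          rw [← Function.iterate_add_apply, mul_smul_comm, mul_smul_comm, smul_smul, ← mul_assoc,
            ← natCast_zsmul, smul_smul]
        · rw [iterate_map_zero, mul_zero, smul_zero]
      · have := le_of_apply_ne_zero hg h₁; have := le_of_apply_ne_zero hh h₂
        simp only [mem_product, mem_Icc]
        omega
    · exact (sum_eq_zero fun q _ => if_neg him).symm
  rw [pmul_apply_eq_sum D (S := Icc (n - 2 * N) N ×ˢ Icc (n - N) (2 * N)) fun p h₁ h₂ hp => ?_]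
  · rw [sum_congr rfl fun p hp => expand p.1 p.2 (mem_product.1 hp).2, ← sum_product']
    refine sum_nbij' (fun x => (x.1.1, x.2.1, x.2.2, x.1.2))
      (fun x => ((x.1, x.2.2.2), x.2.1, x.2.2.1)) ?_ ?_
      (fun _ _ => rfl) (fun _ _ => rfl) (fun _ _ => rfl) <;>
    · intro x hx
      simp only [mem_product] at hx ⊢
      tauto
  · have := le_of_apply_ne_zero hf h₁; have := le_of_apply_ne_zero hgh h₂
    simp only [mem_product, mem_Icc]
    omega

theorem pmul_assoc (hf : IsPDO f) (hg : IsPDO g) (hh : IsPDO h) :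
    pmul D (pmul D f g) h = pmul D f (pmul D g h) := by
  obtain ⟨N, hfN, hgN, hhN⟩ :=
    (hf.eventually_bound.and (hg.eventually_bound.and hh.eventually_bound)).exists
  funext n
  rw [pmul_pmul_apply_eq_sum_assocTermLeft D hfN hgN hhN,
    pmul_pmul_apply_eq_sum_assocTermRight D hfN hgN hhN]
  simp only [sum_product]
  refine sum_congr rfl fun i hi => sum_congr rfl fun j hj => sum_congr rfl fun k hk => ?_
  rw [mem_Icc] at hi hj hk
  exact sum_assocTermLeft_eq_sum_assocTermRight D (Icc_subset_Icc (by omega) (by omega))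
    (Icc_subset_Icc (by omega) (by omega))

end Associativity

section Bracket

variable (D : Derivation ℤ A A) {f f₁ f₂ g g₁ g₂ h : ℤ → A}

theorem IsPDO.brk (hf : IsPDO f) (hg : IsPDO g) : IsPDO (brk D f g) :=
  (hf.pmul D hg).sub (hg.pmul D hf)

theorem IsPDO.brkR (hf : IsPDO f) (hg : IsPDO g) : IsPDO (brkR D f g) :=
  (hf.rMat.brk D hg).add (hf.brk D hg.rMat)

theorem brk_add_left (hf₁ : IsPDO f₁) (hf₂ : IsPDO f₂) (hg : IsPDO g) :
    brk D (f₁ + f₂) g = brk D f₁ g + brk D f₂ g := by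
  rw [brk, brk, brk, pmul_add_left D hf₁ hf₂ hg, pmul_add_right D hg hf₁ hf₂]
  abel

theorem brk_add_right (hf : IsPDO f) (hg₁ : IsPDO g₁) (hg₂ : IsPDO g₂) :
    brk D f (g₁ + g₂) = brk D f g₁ + brk D f g₂ := by
  rw [brk, brk, brk, pmul_add_right D hf hg₁ hg₂, pmul_add_left D hg₁ hg₂ hf]
  abel

theorem brk_neg_left (f g : ℤ → A) : brk D (-f) g = -brk D f g := by
  rw [brk, brk, pmul_neg_left, pmul_neg_right]
  abel

theorem brk_neg_right (f g : ℤ → A) : brk D f (-g) = -brk D f g := by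
  rw [brk, brk, pmul_neg_left, pmul_neg_right]
  abel

theorem brk_jacobi (hf : IsPDO f) (hg : IsPDO g) (hh : IsPDO h) :
    brk D f (brk D g h) + brk D g (brk D h f) + brk D h (brk D f g) = 0 := by
  have hfg := hf.pmul D hg; have hgf := hg.pmul D hf
  have hgh := hg.pmul D hh; have hhg := hh.pmul D hg
  have hhf := hh.pmul D hf; have hfh := hf.pmul D hh
  simp only [brk]
  rw [pmul_sub_right D hf hgh hhg, pmul_sub_left D hgh hhg hf,
    pmul_sub_right D hg hhf hfh, pmul_sub_left D hhf hfh hg,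
    pmul_sub_right D hh hfg hgf, pmul_sub_left D hfg hgf hh,
    pmul_assoc D hf hg hh, pmul_assoc D hf hh hg, pmul_assoc D hg hh hf,
    pmul_assoc D hg hf hh, pmul_assoc D hh hf hg, pmul_assoc D hh hg hf]
  abel

theorem brk_eq_parts (hf : IsPDO f) (hg : IsPDO g) :
    brk D f g = brk D (posPart f) (posPart g) + brk D (posPart f) (negPart g) +
      brk D (negPart f) (posPart g) + brk D (negPart f) (negPart g) := by
  conv_lhs => rw [← posPart_add_negPart f, ← posPart_add_negPart g]
  rw [brk_add_left D hf.posPart hf.negPart (hg.posPart.add hg.negPart),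
    brk_add_right D hf.posPart hg.posPart hg.negPart,
    brk_add_right D hf.negPart hg.posPart hg.negPart]
  abel

theorem brkR_eq_posPart_sub_negPart (hf : IsPDO f) (hg : IsPDO g) :
    brkR D f g = 2 • brk D (posPart f) (posPart g) - 2 • brk D (negPart f) (negPart g) := by
  rw [brkR, brk_eq_parts D hf.rMat hg, brk_eq_parts D hf hg.rMat, posPart_rMat, negPart_rMat,
    posPart_rMat, negPart_rMat, brk_neg_left, brk_neg_left, brk_neg_right, brk_neg_right]
  abel

theorem brk_posPart_apply_of_neg {n : ℤ} (hn : n < 0) :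
    brk D (posPart f) (posPart g) n = 0 := by
  have hpos : ∀ {u : ℤ → A}, ∀ i < 0, posPart u i = 0 := fun i hi => if_neg (not_le.2 hi)
  rw [brk, Pi.sub_apply, pmul_apply_eq_zero_of_neg D hpos hpos hn,
    pmul_apply_eq_zero_of_neg D hpos hpos hn, sub_zero]

theorem brk_negPart_apply_of_nonneg {n : ℤ} (hn : 0 ≤ n) :
    brk D (negPart f) (negPart g) n = 0 := by
  have hneg : ∀ {u : ℤ → A}, ∀ i ≥ 0, negPart u i = 0 := fun i hi => if_neg (not_lt.2 hi)
  rw [brk, Pi.sub_apply, pmul_apply_eq_zero_of_nonneg D hneg hneg hn,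
    pmul_apply_eq_zero_of_nonneg D hneg hneg hn, sub_zero]

theorem posPart_brkR (hf : IsPDO f) (hg : IsPDO g) :
    posPart (brkR D f g) = 2 • brk D (posPart f) (posPart g) := by
  funext n
  rw [brkR_eq_posPart_sub_negPart D hf hg]
  by_cases hn : 0 ≤ n
  · simp [TwoBKP.posPart, hn, brk_negPart_apply_of_nonneg D hn]
  · simp [TwoBKP.posPart, hn, brk_posPart_apply_of_neg D (not_le.1 hn)]

theorem negPart_brkR (hf : IsPDO f) (hg : IsPDO g) :
    negPart (brkR D f g) = -(2 • brk D (negPart f) (negPart g)) := by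
  funext n
  rw [brkR_eq_posPart_sub_negPart D hf hg]
  by_cases hn : n < 0
  · simp [TwoBKP.negPart, hn, brk_posPart_apply_of_neg D hn]
  · simp [TwoBKP.negPart, hn, brk_negPart_apply_of_nonneg D (not_lt.1 hn)]

theorem rMat_brkR (hf : IsPDO f) (hg : IsPDO g) :
    rMat (brkR D f g) =
      2 • brk D (posPart f) (posPart g) + 2 • brk D (negPart f) (negPart g) := by
  rw [rMat, posPart_brkR D hf hg, negPart_brkR D hf hg, sub_neg_eq_add]

theorem brkR_brkR (hf : IsPDO f) (hg : IsPDO g) (hh : IsPDO h) :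
    brkR D f (brkR D g h) = 4 • brk D (posPart f) (brk D (posPart g) (posPart h)) +
      4 • brk D (negPart f) (brk D (negPart g) (negPart h)) := by
  have hP := hg.posPart.brk D hh.posPart
  have hN := hg.negPart.brk D hh.negPart
  have brk_two_nsmul : ∀ {x y : ℤ → A}, IsPDO x → IsPDO y → brk D x (2 • y) = 2 • brk D x y :=
    fun hx hy => by rw [two_nsmul, two_nsmul, brk_add_right D hx hy hy]
  rw [brkR_eq_posPart_sub_negPart D hf (hg.brkR D hh), posPart_brkR D hg hh,
    negPart_brkR D hg hh, brk_neg_right, brk_two_nsmul hf.posPart hP, brk_two_nsmul hf.negPart hN]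
  abel

end Bracket

end TwoBKP

open TwoBKP in
theorem rMat_solves_modifiedYangBaxter {A : Type*} [CommRing A]
    (D : Derivation ℤ A A) :
    -- the modified Yang–Baxter equation
    (∀ f g : ℤ → A, IsPDO f → IsPDO g →
        brk ⇑D (rMat f) (rMat g) - rMat (brkR ⇑D f g) = - brk ⇑D f g) ∧
    -- consequently [·,·]_R is a second Lie bracket on 𝒟⁻: alternating …
    (∀ f : ℤ → A, IsPDO f → brkR ⇑D f f = 0) ∧
    -- … and satisfying the Jacobi identity
    (∀ f g h : ℤ → A, IsPDO f → IsPDO g → IsPDO h →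
        brkR ⇑D f (brkR ⇑D g h) + brkR ⇑D g (brkR ⇑D h f)
          + brkR ⇑D h (brkR ⇑D f g) = 0) := by
  refine ⟨fun f g hf hg => ?_, fun f _ => ?_, fun f g h hf hg hh => ?_⟩
  · rw [brk_eq_parts D hf.rMat hg.rMat, posPart_rMat, negPart_rMat, posPart_rMat, negPart_rMat,
      brk_neg_left, brk_neg_right, brk_neg_left, brk_neg_right, rMat_brkR D hf hg,
      brk_eq_parts D hf hg]
    abel
  · rw [brkR, brk, brk]
    abel
  · rw [brkR_brkR D hf hg hh, brkR_brkR D hg hh hf, brkR_brkR D hh hf hg]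
    have jacobiPos := brk_jacobi D hf.posPart hg.posPart hh.posPart
    have jacobiNeg := brk_jacobi D hf.negPart hg.negPart hh.negPart
    linear_combination (norm := abel) 4 • jacobiPos + 4 • jacobiNeg
end
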